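/- For any edge e = (a, v) ∈ E satisfying dist(x_i, y_i) = dist(x_i, a) + ℓ(a, v) + dist(v, y_i) for i = 1, 2, the following polynomial identity holds: H_{av}(x1, y1, x2, y2) = F(x2, a) · z_{av}² · F_disj(x1, a, v, y2) · F(v, y1). -/

import Mathlib

/-!
Cutting both paths of a pair in `H_{av}` at the common edge `(a, v)` is a bijection onto
`Π(x2, a) × {internally disjoint pairs in Π(x1, a) × Π(v, y2)} × Π(v, y1)`, under which the
monomial picks up `z_{av}` once from each path. Its inverse glues the pieces back along `(a, v)`:
by the distance hypothesis the glued walk has weight `dist(xᵢ, yᵢ)`, and it is a simple path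
because a vertex shared by the two pieces would cut off a closed walk through `(a, v)`, of
positive weight, leaving an even lighter `xᵢ`–`yᵢ` walk.
-/

open scoped BigOperators

namespace DSP

variable {V : Type*} [Fintype V] [DecidableEq V]

/-- A path: a nonempty list of distinct vertices in which each consecutive
pair is joined by a directed edge. -/
def IsPath (E : V → V → Prop) (p : List V) : Prop :=
  p ≠ [] ∧ p.Nodup ∧ p.Chain' E

/-- A path from `x` to `y`. -/
def IsPathFrom (E : V → V → Prop) (p : List V) (x y : V) : Prop :=
  IsPath E p ∧ p.head? = some x ∧ p.getLast? = some y

/-- The (ordered) list of edges of a path. -/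
def pathEdges (p : List V) : List (V × V) := p.zip p.tail

/-- The weight of a path: the sum of its edge weights. -/
def pathWeight (ℓ : V → V → ℝ) (p : List V) : ℝ :=
  ((pathEdges p).map fun e => ℓ e.1 e.2).sum

/-- `dist x y` : the minimum weight of a path from `x` to `y`
(`⊤` if there is no such path). -/
noncomputable def dist (E : V → V → Prop) (ℓ : V → V → ℝ) (x y : V) : EReal :=
  sInf {w : EReal | ∃ p : List V, IsPathFrom E p x y ∧ (pathWeight ℓ p : EReal) = w}

/-- A shortest path from `x` to `y` : a path from `x` to `y` whose weight
equals `dist x y`.  `Π(x, y)` is the set of all such paths. -/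
def IsShortestPath (E : V → V → Prop) (ℓ : V → V → ℝ) (p : List V) (x y : V) : Prop :=
  IsPathFrom E p x y ∧ (pathWeight ℓ p : EReal) = dist E ℓ x y

/-- A directed cycle: a closed walk with at least one edge whose internal
vertices are pairwise distinct. -/
def IsCycle (E : V → V → Prop) (p : List V) : Prop :=
  2 ≤ p.length ∧ p.Chain' E ∧ p.head? = p.getLast? ∧ p.tail.Nodup

/-- `G` contains no directed cycle of negative or zero total weight. -/
def NoNonposCycle (E : V → V → Prop) (ℓ : V → V → ℝ) : Prop :=
  ∀ p : List V, IsCycle E p → 0 < pathWeight ℓ p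

/-- `G` is a DAG: it contains no directed cycle. -/
def Acyclic (E : V → V → Prop) : Prop :=
  ∀ p : List V, ¬ IsCycle E p

/-- `x` precedes `y` on the path `p` (`x = y` allowed). -/
def Precedes (p : List V) (x y : V) : Prop :=
  x ∈ p ∧ y ∈ p ∧ p.idxOf x ≤ p.idxOf y

/-- `subpath p x y` : the subpath `p[x, y]` of `p` from `x` to `y`
(for `x` preceding `y` on `p`). -/
def subpath (p : List V) (x y : V) : List V :=
  (p.take (p.idxOf y + 1)).drop (p.idxOf x)

/-- Concatenation `p · q` of two paths (the last vertex of `p` coinciding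
with the first vertex of `q`). -/
def pathConcat (p q : List V) : List V := p ++ q.tail

/-- A vertex is internal to a path if it lies on it and is not an endpoint. -/
def Internal (p : List V) (v : V) : Prop :=
  v ∈ p ∧ p.head? ≠ some v ∧ p.getLast? ≠ some v

/-- Paths `p1` from `x1` to `y1` and `p2` from `x2` to `y2` are internally
vertex-disjoint: they share no vertices except possibly those in
`{x1, y1} ∩ {x2, y2}`. -/
def InternallyDisjoint (p1 : List V) (x1 y1 : V) (p2 : List V) (x2 y2 : V) : Prop :=
  ∀ u, u ∈ p1 → u ∈ p2 → u ∈ ({x1, y1} ∩ {x2, y2} : Set V)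

/-- `(a, b)` is a twin-crossing pair for paths `p1`, `p2`. -/
def TwinCrossingPair (p1 p2 : List V) (a b : V) : Prop :=
  a ≠ b ∧ Precedes p1 a b ∧ Precedes p2 a b ∧ subpath p1 a b ≠ subpath p2 a b

/-- The swap operation `φ_{a,b}(P1, P2)`. -/
def swap (p1 : List V) (x1 y1 : V) (p2 : List V) (x2 y2 : V) (a b : V) :
    List V × List V :=
  (pathConcat (pathConcat (subpath p1 x1 a) (subpath p2 a b)) (subpath p1 b y1),
   pathConcat (pathConcat (subpath p2 x2 a) (subpath p1 a b)) (subpath p2 b y2))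

/-- The graph with vertex `u` deleted. -/
def deleteVertex (E : V → V → Prop) (u : V) : V → V → Prop :=
  fun a b => E a b ∧ a ≠ u ∧ b ≠ u

/-- `u` is distance-critical for `(x, y)` : deleting `u` strictly increases
the distance from `x` to `y`. -/
def DistCritical (E : V → V → Prop) (ℓ : V → V → ℝ) (x y u : V) : Prop :=
  dist E ℓ x y < dist (deleteVertex E u) ℓ x y

/-- `Δ(x, y)` : the distance-critical vertices for `(x, y)` together with the
endpoints `x`, `y`. -/
def Delta (E : V → V → Prop) (ℓ : V → V → ℝ) (x y : V) : Set V :=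
  {u | DistCritical E ℓ x y u} ∪ {x, y}

/-- `δ(x, y) = |Δ(x, y)|`. -/
noncomputable def deltaCard (E : V → V → Prop) (ℓ : V → V → ℝ) (x y : V) : ℕ :=
  (Delta E ℓ x y).ncard

/-- `(a, b)` is a concordant pair for paths `p1` (from `x1` to `y1`) and
`p2` (from `x2` to `y2`). -/
def ConcordantPair (p1 : List V) (x1 y1 : V) (p2 : List V) (x2 y2 : V) (a b : V) : Prop :=
  a ∉ ({x1, y1} ∩ {x2, y2} : Set V) ∧ b ∉ ({x1, y1} ∩ {x2, y2} : Set V) ∧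
  Precedes p1 a b ∧ Precedes p2 a b ∧
  InternallyDisjoint (subpath p1 x1 a) x1 a (subpath p2 x2 a) x2 a ∧
  InternallyDisjoint (subpath p1 b y1) b y1 (subpath p2 b y2) b y2

/-- `𝒞(P1, P2)` : the set of concordant pairs for `(P1, P2)`. -/
def concordantSet (p1 : List V) (x1 y1 : V) (p2 : List V) (x2 y2 : V) : Set (V × V) :=
  {c | ConcordantPair p1 x1 y1 p2 x2 y2 c.1 c.2}

/-- The interaction complexity `γ(P1, P2) = Σ_{(v,w) ∈ 𝒞(P1,P2)} δ(v, w)`. -/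
noncomputable def gamma (E : V → V → Prop) (ℓ : V → V → ℝ)
    (p1 : List V) (x1 y1 : V) (p2 : List V) (x2 y2 : V) : ℕ :=
  ∑ᶠ c ∈ concordantSet p1 x1 y1 p2 x2 y2, deltaCard E ℓ c.1 c.2

/-- `E(x, y)` : the set of edges lying on at least one shortest path
from `x` to `y`. -/
def shortestEdges (E : V → V → Prop) (ℓ : V → V → ℝ) (x y : V) : Set (V × V) :=
  {e | ∃ p : List V, IsShortestPath E ℓ p x y ∧ e ∈ pathEdges p}

section Poly

variable (F : Type*) [Field F] [CharP F 2]

/-- The monomial `f(P) = ∏_{e ∈ E(P)} z_e` of a path. -/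
noncomputable def pathMon (p : List V) : MvPolynomial (V × V) F :=
  ((pathEdges p).map fun e => MvPolynomial.X e).prod

/-- The enumerating polynomial of a collection of paths. -/
noncomputable def enumPoly (S : Set (List V)) : MvPolynomial (V × V) F :=
  ∑ᶠ p ∈ S, pathMon F p

/-- The enumerating polynomial of a collection of pairs of paths. -/
noncomputable def enumPoly2 (S : Set (List V × List V)) : MvPolynomial (V × V) F :=
  ∑ᶠ q ∈ S, pathMon F q.1 * pathMon F q.2

variable (E : V → V → Prop) (ℓ : V → V → ℝ)

/-- `F(x, y)` : the enumerating polynomial of `Π(x, y)`. -/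
noncomputable def Fpoly (x y : V) : MvPolynomial (V × V) F :=
  enumPoly F {p : List V | IsShortestPath E ℓ p x y}

end Poly

variable (E : V → V → Prop) (ℓ : V → V → ℝ)

/-- The collection of internally vertex-disjoint pairs
`(P1, P2) ∈ Π(x1, y1) × Π(x2, y2)`. -/
def disjPairs (x1 y1 x2 y2 : V) : Set (List V × List V) :=
  {q | IsShortestPath E ℓ q.1 x1 y1 ∧ IsShortestPath E ℓ q.2 x2 y2 ∧
       InternallyDisjoint q.1 x1 y1 q.2 x2 y2}

/-- Pairs `(P1, P2) ∈ Π(x1, y1) × Π(x2, y2)` such that `v ∈ V(P1) ∩ V(P2)`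
and the prefix `P1[x1, v]` and the suffix `P2[v, y2]` are internally
vertex-disjoint (defining `H_v`). -/
def HvPairs (v x1 y1 x2 y2 : V) : Set (List V × List V) :=
  {q | IsShortestPath E ℓ q.1 x1 y1 ∧ IsShortestPath E ℓ q.2 x2 y2 ∧
       v ∈ q.1 ∧ v ∈ q.2 ∧
       InternallyDisjoint (subpath q.1 x1 v) x1 v (subpath q.2 v y2) v y2}

/-- Pairs `(P1, P2) ∈ Π(x1, y1) × Π(x2, y2)` such that
`(a, v) ∈ E(P1) ∩ E(P2)` and the prefix `P1[x1, a]` and the suffix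
`P2[v, y2]` are internally vertex-disjoint (defining `H_{av}`). -/
def HavPairs (a v x1 y1 x2 y2 : V) : Set (List V × List V) :=
  {q | IsShortestPath E ℓ q.1 x1 y1 ∧ IsShortestPath E ℓ q.2 x2 y2 ∧
       (a, v) ∈ pathEdges q.1 ∧ (a, v) ∈ pathEdges q.2 ∧
       InternallyDisjoint (subpath q.1 x1 a) x1 a (subpath q.2 v y2) v y2}

/-- Pairs `(P1, P2) ∈ Π(x1, y1) × Π(x2, y2)` such that `v ∈ V(P1) ∩ V(P2)`
and the prefix `P1[x1, v]` is internally vertex-disjoint from both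
`P2[x2, v]` and `P2[v, y2]` (defining `D_v`). -/
def DvPairs (v x1 y1 x2 y2 : V) : Set (List V × List V) :=
  {q | IsShortestPath E ℓ q.1 x1 y1 ∧ IsShortestPath E ℓ q.2 x2 y2 ∧
       v ∈ q.1 ∧ v ∈ q.2 ∧
       InternallyDisjoint (subpath q.1 x1 v) x1 v (subpath q.2 x2 v) x2 v ∧
       InternallyDisjoint (subpath q.1 x1 v) x1 v (subpath q.2 v y2) v y2}

/-- Pairs `(P1, P2) ∈ Π(x1, y1) × Π(x2, y2)` with interaction complexity
`γ(P1, P2) ≤ k` (defining `F_{disj,k}`). -/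
def disjkPairs (k : ℤ) (x1 y1 x2 y2 : V) : Set (List V × List V) :=
  {q | IsShortestPath E ℓ q.1 x1 y1 ∧ IsShortestPath E ℓ q.2 x2 y2 ∧
       (gamma E ℓ q.1 x1 y1 q.2 x2 y2 : ℤ) ≤ k}

/-- Pairs `(P1, P2) ∈ Π(x1, y1) × Π(x2, y2)` with `γ(P1, P2) ≤ k` such that
`(v, w) ∈ 𝒞(P1, P2)` and `(v, w)` is the concordant pair appearing first
along `P1` (defining `D_{v,w,k}`). -/
def DvwkPairs (k : ℤ) (v w x1 y1 x2 y2 : V) : Set (List V × List V) :=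
  {q | IsShortestPath E ℓ q.1 x1 y1 ∧ IsShortestPath E ℓ q.2 x2 y2 ∧
       (gamma E ℓ q.1 x1 y1 q.2 x2 y2 : ℤ) ≤ k ∧
       (v, w) ∈ concordantSet q.1 x1 y1 q.2 x2 y2 ∧
       ∀ c ∈ concordantSet q.1 x1 y1 q.2 x2 y2, q.1.idxOf v ≤ q.1.idxOf c.1}

/-- Pairs `(P1, P2) ∈ Π(x1, y1) × Π(x2, y2)` such that `v` and `w` lie on
both paths with `v` preceding `w` on both, the subpaths `P1[x1, v]` and
`P2[w, y2]` are internally vertex-disjoint, and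
`γ(P1[v, y1], P2[x2, w]) ≤ k` (defining `H_{v,w,k}`). -/
def HvwkPairs (k : ℤ) (v w x1 y1 x2 y2 : V) : Set (List V × List V) :=
  {q | IsShortestPath E ℓ q.1 x1 y1 ∧ IsShortestPath E ℓ q.2 x2 y2 ∧
       Precedes q.1 v w ∧ Precedes q.2 v w ∧
       InternallyDisjoint (subpath q.1 x1 v) x1 v (subpath q.2 w y2) w y2 ∧
       (gamma E ℓ (subpath q.1 v y1) v y1 (subpath q.2 x2 w) x2 w : ℤ) ≤ k}

/-- As `HvwkPairs`, additionally requiring the edge `(a, v)` on both paths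
(disjointness imposed on `P1[x1, a]` and `P2[w, y2]`), defining `H_{av,w,k}`. -/
def HavwkPairs (k : ℤ) (a v w x1 y1 x2 y2 : V) : Set (List V × List V) :=
  {q | IsShortestPath E ℓ q.1 x1 y1 ∧ IsShortestPath E ℓ q.2 x2 y2 ∧
       Precedes q.1 v w ∧ Precedes q.2 v w ∧
       (a, v) ∈ pathEdges q.1 ∧ (a, v) ∈ pathEdges q.2 ∧
       InternallyDisjoint (subpath q.1 x1 a) x1 a (subpath q.2 w y2) w y2 ∧
       (gamma E ℓ (subpath q.1 v y1) v y1 (subpath q.2 x2 w) x2 w : ℤ) ≤ k}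

/-- As `HvwkPairs`, additionally requiring the edge `(w, b)` on both paths
(disjointness imposed on `P1[x1, v]` and `P2[b, y2]`), defining `H_{v,wb,k}`. -/
def HvwbkPairs (k : ℤ) (v w b x1 y1 x2 y2 : V) : Set (List V × List V) :=
  {q | IsShortestPath E ℓ q.1 x1 y1 ∧ IsShortestPath E ℓ q.2 x2 y2 ∧
       Precedes q.1 v w ∧ Precedes q.2 v w ∧
       (w, b) ∈ pathEdges q.1 ∧ (w, b) ∈ pathEdges q.2 ∧
       InternallyDisjoint (subpath q.1 x1 v) x1 v (subpath q.2 b y2) b y2 ∧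
       (gamma E ℓ (subpath q.1 v y1) v y1 (subpath q.2 x2 w) x2 w : ℤ) ≤ k}

/-- As `HvwkPairs`, additionally requiring both edges `(a, v)` and `(w, b)`
on both paths (disjointness imposed on `P1[x1, a]` and `P2[b, y2]`),
defining `H_{av,wb,k}`. -/
def HavwbkPairs (k : ℤ) (a v w b x1 y1 x2 y2 : V) : Set (List V × List V) :=
  {q | IsShortestPath E ℓ q.1 x1 y1 ∧ IsShortestPath E ℓ q.2 x2 y2 ∧
       Precedes q.1 v w ∧ Precedes q.2 v w ∧
       (a, v) ∈ pathEdges q.1 ∧ (a, v) ∈ pathEdges q.2 ∧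
       (w, b) ∈ pathEdges q.1 ∧ (w, b) ∈ pathEdges q.2 ∧
       InternallyDisjoint (subpath q.1 x1 a) x1 a (subpath q.2 b y2) b y2 ∧
       (gamma E ℓ (subpath q.1 v y1) v y1 (subpath q.2 x2 w) x2 w : ℤ) ≤ k}

end DSP

namespace DSP

open List

variable {V : Type*} {E : V → V → Prop} {ℓ : V → V → ℝ}

lemma exists_eq_append_cons_append_cons_of_not_nodup {α : Type*} :
    ∀ {l : List α}, ¬ l.Nodup → ∃ u c m t, l = u ++ c :: (m ++ c :: t) ∧ (c :: m).Nodup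
  | [], h => absurd nodup_nil h
  | a :: q, h => by
    by_cases hq : q.Nodup
    · have ha : a ∈ q := by simpa [hq] using h
      obtain ⟨m, t, rfl⟩ := append_of_mem ha
      refine ⟨[], a, m, t, rfl, nodup_cons.2 ⟨fun ham => ?_, (nodup_append.1 hq).1⟩⟩
      exact (nodup_append.1 hq).2.2 a ham a mem_cons_self rfl
    · obtain ⟨u, c, m, t, rfl, hcm⟩ := exists_eq_append_cons_append_cons_of_not_nodup hq
      exact ⟨a :: u, c, m, t, rfl, hcm⟩

lemma pathEdges_cons_cons (a b : V) (l : List V) :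
    pathEdges (a :: b :: l) = (a, b) :: pathEdges (b :: l) := rfl

lemma pathEdges_append_cons : ∀ (s : List V) (c : V) (t : List V),
    pathEdges (s ++ c :: t) = pathEdges (s ++ [c]) ++ pathEdges (c :: t)
  | [], _, _ => rfl
  | [_], _, _ => rfl
  | x :: y :: s, c, t => by
    simpa [pathEdges_cons_cons] using pathEdges_append_cons (y :: s) c t

lemma pathEdges_append {s t : List V} {a v : V} (hs : s.getLast? = some a)
    (ht : t.head? = some v) : pathEdges (s ++ t) = pathEdges s ++ (a, v) :: pathEdges t := by
  obtain ⟨s, rfl⟩ := getLast?_eq_some_iff.1 hs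
  obtain ⟨t, rfl⟩ := head?_eq_some_iff.1 ht
  rw [append_assoc, singleton_append, pathEdges_append_cons, pathEdges_cons_cons]

lemma mem_pathEdges_iff {p : List V} {a v : V} :
    (a, v) ∈ pathEdges p ↔
      ∃ s t, s.getLast? = some a ∧ t.head? = some v ∧ p = s ++ t := by
  constructor
  · induction p with
    | nil => simp [pathEdges]
    | cons x l ih =>
      cases l with
      | nil => simp [pathEdges]
      | cons y l =>
        rw [pathEdges_cons_cons, mem_cons]
        rintro (h | h)
        · obtain ⟨rfl, rfl⟩ := Prod.mk.inj h
          exact ⟨[a], v :: l, rfl, rfl, rfl⟩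
        · obtain ⟨s, t, hs, ht, hst⟩ := ih h
          refine ⟨x :: s, t, ?_, ht, by rw [hst, cons_append]⟩
          rw [getLast?_cons, hs]
          rfl
  · rintro ⟨s, t, hs, ht, rfl⟩
    rw [pathEdges_append hs ht]
    exact mem_append_right _ mem_cons_self

lemma pathWeight_append_cons (s : List V) (c : V) (t : List V) :
    pathWeight ℓ (s ++ c :: t) = pathWeight ℓ (s ++ [c]) + pathWeight ℓ (c :: t) := by
  unfold pathWeight
  rw [pathEdges_append_cons, map_append, sum_append]

lemma pathWeight_append {s t : List V} {a v : V} (hs : s.getLast? = some a)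
    (ht : t.head? = some v) :
    pathWeight ℓ (s ++ t) = pathWeight ℓ s + ℓ a v + pathWeight ℓ t := by
  simp [pathWeight, pathEdges_append hs ht, add_assoc]

lemma pathMon_append (F : Type*) [Field F] {s t : List V} {a v : V}
    (hs : s.getLast? = some a) (ht : t.head? = some v) :
    pathMon F (s ++ t) = pathMon F s * MvPolynomial.X (a, v) * pathMon F t := by
  simp [pathMon, pathEdges_append hs ht, mul_assoc]

lemma isChain_append_of_edge {s t : List V} {a v : V} (hs : IsChain E s) (ht : IsChain E t)
    (ha : s.getLast? = some a) (hv : t.head? = some v) (hE : E a v) : IsChain E (s ++ t) :=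
  hs.append ht (by simp [ha, hv, hE])

lemma IsPathFrom.split {s t : List V} {c x y : V} (h : IsPathFrom E (s ++ c :: t) x y) :
    IsPathFrom E (s ++ [c]) x c ∧ IsPathFrom E (c :: t) c y := by
  obtain ⟨⟨-, hnd, hch⟩, hx, hy⟩ := h
  have hnd' : (s ++ [c] ++ t).Nodup := by simpa using hnd
  obtain ⟨hsc, hct⟩ := isChain_split.1 hch
  refine ⟨⟨⟨by simp, (nodup_append.1 hnd').1, hsc⟩, ?_, getLast?_concat⟩,
    ⟨⟨cons_ne_nil _ _, (nodup_append.1 hnd).2.1, hct⟩, rfl, ?_⟩⟩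
  · cases s <;> simpa using hx
  · rwa [getLast?_append_cons] at hy

lemma isPathFrom_append_iff {s t : List V} {x y a v : V} (ha : s.getLast? = some a)
    (hv : t.head? = some v) :
    IsPathFrom E (s ++ t) x y ↔
      IsPathFrom E s x a ∧ IsPathFrom E t v y ∧ E a v ∧ s.Disjoint t := by
  obtain ⟨s, rfl⟩ := getLast?_eq_some_iff.1 ha
  obtain ⟨t, rfl⟩ := head?_eq_some_iff.1 hv
  have hx : (s ++ [a] ++ v :: t).head? = (s ++ [a]).head? := by cases s <;> rfl
  constructor
  · rintro ⟨⟨-, hnd, hch⟩, hxs, hy⟩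
    obtain ⟨hnds, hndt, hdisj⟩ := nodup_append'.1 hnd
    obtain ⟨hchs, hcht, hedge⟩ := isChain_append.1 hch
    exact ⟨⟨⟨by simp, hnds, hchs⟩, hx ▸ hxs, getLast?_concat⟩,
      ⟨⟨cons_ne_nil _ _, hndt, hcht⟩, rfl, by rwa [getLast?_append_cons] at hy⟩,
      hedge a (by simp) v rfl, hdisj⟩
  · rintro ⟨⟨⟨-, hnds, hchs⟩, hxs, -⟩, ⟨⟨-, hndt, hcht⟩, -, hy⟩, hE, hdisj⟩
    exact ⟨⟨by simp, nodup_append'.2 ⟨hnds, hndt, hdisj⟩,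
      isChain_append_of_edge hchs hcht getLast?_concat rfl hE⟩, hx ▸ hxs,
      by rwa [getLast?_append_cons]⟩

lemma IsPathFrom.eq_singleton {p : List V} {u : V} (h : IsPathFrom E p u u) : p = [u] := by
  obtain ⟨⟨-, hnd, -⟩, hh, hl⟩ := h
  obtain ⟨t, rfl⟩ := head?_eq_some_iff.1 hh
  cases t with
  | nil => rfl
  | cons w t =>
    rw [getLast?_cons_cons] at hl
    exact absurd (mem_of_getLast? hl) (nodup_cons.1 hnd).1

lemma pathWeight_lt_of_remove_cycle (hG : NoNonposCycle E ℓ) {u m t : List V} {c : V}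
    (hcm : (c :: m).Nodup) (hch : IsChain E (c :: m ++ [c])) :
    pathWeight ℓ (u ++ c :: t) < pathWeight ℓ (u ++ c :: (m ++ c :: t)) := by
  have hcycle : IsCycle E (c :: m ++ [c]) :=
    ⟨by simp, hch, by rw [getLast?_concat]; rfl, (nodup_append_comm (l₁ := [c])).1 hcm⟩
  have hpos := hG _ hcycle
  rw [pathWeight_append_cons u c t, pathWeight_append_cons u c (m ++ c :: t), ← cons_append,
    pathWeight_append_cons (c :: m) c t]
  linarith

lemma exists_isPathFrom_pathWeight_le (hG : NoNonposCycle E ℓ) {p : List V} {x y : V}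
    (hp : p ≠ []) (hch : IsChain E p) (hx : p.head? = some x) (hy : p.getLast? = some y) :
    ∃ q, IsPathFrom E q x y ∧ pathWeight ℓ q ≤ pathWeight ℓ p ∧
      (¬ p.Nodup → pathWeight ℓ q < pathWeight ℓ p) := by
  induction hn : p.length using Nat.strong_induction_on generalizing p with
  | _ n ih =>
    by_cases hnd : p.Nodup
    · exact ⟨p, ⟨⟨hp, hnd, hch⟩, hx, hy⟩, le_rfl, absurd hnd⟩
    obtain ⟨u, c, m, t, rfl, hcm⟩ := exists_eq_append_cons_append_cons_of_not_nodup hnd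
    obtain ⟨huc, hc⟩ := isChain_split.1 hch
    obtain ⟨hcycle, hct⟩ := isChain_split.1 (show IsChain E ((c :: m) ++ c :: t) from hc)
    have hx' : (u ++ c :: t).head? = some x := by cases u <;> simpa using hx
    have hy' : (u ++ c :: t).getLast? = some y := by
      rwa [getLast?_append_cons, ← cons_append, getLast?_append_cons, ← getLast?_append_cons u]
        at hy
    obtain ⟨q, hq, hle, -⟩ :=
      ih _ (by simp at hn ⊢; omega) (by simp) (isChain_split.2 ⟨huc, hct⟩) hx' hy' rfl
    have hlt := pathWeight_lt_of_remove_cycle hG (u := u) (t := t) hcm hcycle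
    exact ⟨q, hq, by linarith, fun _ => by linarith⟩

lemma dist_le_pathWeight {p : List V} {x y : V} (hp : IsPathFrom E p x y) :
    dist E ℓ x y ≤ pathWeight ℓ p :=
  sInf_le ⟨p, hp, rfl⟩

lemma dist_le_pathWeight_of_isChain (hG : NoNonposCycle E ℓ) {p : List V} {x y : V}
    (hp : p ≠ []) (hch : IsChain E p) (hx : p.head? = some x) (hy : p.getLast? = some y) :
    dist E ℓ x y ≤ pathWeight ℓ p := by
  obtain ⟨q, hq, hle, -⟩ := exists_isPathFrom_pathWeight_le hG hp hch hx hy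
  exact (dist_le_pathWeight hq).trans (EReal.coe_le_coe_iff.2 hle)

lemma pathWeight_pos_of_isChain_cons_append (hG : NoNonposCycle E ℓ) {u : V} {l : List V}
    (hch : IsChain E (u :: (l ++ [u]))) : 0 < pathWeight ℓ (u :: (l ++ [u])) := by
  obtain ⟨q, hq, -, hlt⟩ :=
    exists_isPathFrom_pathWeight_le hG (cons_ne_nil _ _) hch rfl
      (by rw [← cons_append, getLast?_concat])
  rw [hq.eq_singleton] at hlt
  exact hlt (by simp)

lemma finite_setOf_isPathFrom [Fintype V] (x y : V) :
    {p : List V | IsPathFrom E p x y}.Finite :=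
  (finite_length_le V (Fintype.card V)).subset fun _ hp => hp.1.2.1.length_le_card

lemma finite_setOf_isShortestPath [Fintype V] (x y : V) :
    {p : List V | IsShortestPath E ℓ p x y}.Finite :=
  (finite_setOf_isPathFrom x y).subset fun _ hp => hp.1

lemma exists_isShortestPath [Fintype V] {p : List V} {x y : V} (hp : IsPathFrom E p x y) :
    ∃ q, IsShortestPath E ℓ q x y := by
  obtain ⟨q, hq, hw⟩ := Set.Nonempty.csInf_mem
    (s := (fun p => (pathWeight ℓ p : EReal)) '' {p | IsPathFrom E p x y}) ⟨_, p, hp, rfl⟩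
    ((finite_setOf_isPathFrom x y).image _)
  exact ⟨q, hq, hw⟩

lemma disjoint_of_isShortestPath (hG : NoNonposCycle E ℓ) {x y a v : V} (hE : E a v)
    (hd : dist E ℓ x y = dist E ℓ x a + ℓ a v + dist E ℓ v y) {Q R : List V}
    (hQ : IsShortestPath E ℓ Q x a) (hR : IsShortestPath E ℓ R v y) : Q.Disjoint R := by
  -- A common vertex `u` splits off the closed walk `u → a → v → u`, of positive weight;
  -- dropping it leaves an `x`–`y` walk lighter than `dist x y`.
  intro u huQ huR
  obtain ⟨q, q', rfl⟩ := append_of_mem huQ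
  obtain ⟨r, r', rfl⟩ := append_of_mem huR
  obtain ⟨hxu, hua⟩ := hQ.1.split
  obtain ⟨hvu, huy⟩ := hR.1.split
  have hcycle : 0 < pathWeight ℓ (u :: q') + ℓ a v + pathWeight ℓ (r ++ [u]) := by
    rw [← pathWeight_append hua.2.2 hvu.2.1]
    have := isChain_append_of_edge hua.1.2.2 hvu.1.2.2 hua.2.2 hvu.2.1 hE
    simpa using pathWeight_pos_of_isChain_cons_append hG (l := q' ++ r) (by simpa using this)
  have hwalk : dist E ℓ x y ≤ pathWeight ℓ (q ++ u :: r') :=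
    dist_le_pathWeight_of_isChain hG (by simp) (isChain_split.2 ⟨hxu.1.2.2, huy.1.2.2⟩)
      (by cases q <;> simpa using hxu.2.1) (by rw [getLast?_append_cons]; exact huy.2.2)
  rw [hd, ← hQ.2, ← hR.2] at hwalk
  have hle : pathWeight ℓ (q ++ u :: q') + ℓ a v + pathWeight ℓ (r ++ u :: r') ≤
      pathWeight ℓ (q ++ u :: r') := by exact_mod_cast hwalk
  rw [pathWeight_append_cons q u q', pathWeight_append_cons r u r',
    pathWeight_append_cons q u r'] at hle
  linarith

lemma IsShortestPath.append (hG : NoNonposCycle E ℓ) {x y a v : V} (hE : E a v)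
    (hd : dist E ℓ x y = dist E ℓ x a + ℓ a v + dist E ℓ v y) {Q R : List V}
    (hQ : IsShortestPath E ℓ Q x a) (hR : IsShortestPath E ℓ R v y) :
    IsShortestPath E ℓ (Q ++ R) x y := by
  refine ⟨(isPathFrom_append_iff hQ.1.2.2 hR.1.2.1).2
    ⟨hQ.1, hR.1, hE, disjoint_of_isShortestPath hG hE hd hQ hR⟩, ?_⟩
  rw [pathWeight_append hQ.1.2.2 hR.1.2.1, hd, ← hQ.2, ← hR.2]
  push_cast
  rfl

lemma IsShortestPath.of_append [Fintype V] {x y a v : V}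
    (hd : dist E ℓ x y = dist E ℓ x a + ℓ a v + dist E ℓ v y) {Q R : List V}
    (h : IsShortestPath E ℓ (Q ++ R) x y) (ha : Q.getLast? = some a) (hv : R.head? = some v) :
    IsShortestPath E ℓ Q x a ∧ IsShortestPath E ℓ R v y := by
  obtain ⟨hQ, hR, -, -⟩ := (isPathFrom_append_iff ha hv).1 h.1
  obtain ⟨q, hq⟩ := exists_isShortestPath (ℓ := ℓ) hQ
  obtain ⟨r, hr⟩ := exists_isShortestPath (ℓ := ℓ) hR
  have hqQ : pathWeight ℓ q ≤ pathWeight ℓ Q := by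
    have := dist_le_pathWeight (ℓ := ℓ) hQ
    rw [← hq.2] at this
    exact_mod_cast this
  have hrR : pathWeight ℓ r ≤ pathWeight ℓ R := by
    have := dist_le_pathWeight (ℓ := ℓ) hR
    rw [← hr.2] at this
    exact_mod_cast this
  have hsum : pathWeight ℓ Q + ℓ a v + pathWeight ℓ R =
      pathWeight ℓ q + ℓ a v + pathWeight ℓ r := by
    have := h.2
    rw [pathWeight_append ha hv, hd, ← hq.2, ← hr.2] at this
    exact_mod_cast this
  exact ⟨⟨hQ, by rw [← hq.2]; congr 1; linarith⟩,
    ⟨hR, by rw [← hr.2]; congr 1; linarith⟩⟩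

lemma idxOf_append_add_one [DecidableEq V] {s t : List V} {a : V} (hnd : (s ++ t).Nodup)
    (ha : s.getLast? = some a) : (s ++ t).idxOf a + 1 = s.length := by
  obtain ⟨s, rfl⟩ := getLast?_eq_some_iff.1 ha
  have has : a ∉ s := ((nodup_concat s a).1 (by simpa using (nodup_append.1 hnd).1)).1
  rw [append_assoc, singleton_append, idxOf_append_of_notMem has, idxOf_cons_self, length_append,
    length_singleton, add_zero]

lemma append_inj_of_getLast? [DecidableEq V] {s t s' t' : List V} {a : V}
    (hnd : (s ++ t).Nodup) (h : s ++ t = s' ++ t') (ha : s.getLast? = some a)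
    (ha' : s'.getLast? = some a) : s = s' ∧ t = t' :=
  append_inj h <| by
    rw [← idxOf_append_add_one hnd ha, ← idxOf_append_add_one (h ▸ hnd) ha', h]

lemma subpath_append_left [DecidableEq V] {s t : List V} {x a : V} (hnd : (s ++ t).Nodup)
    (hx : s.head? = some x) (ha : s.getLast? = some a) : subpath (s ++ t) x a = s := by
  obtain ⟨s, rfl⟩ := head?_eq_some_iff.1 hx
  rw [subpath, idxOf_append_add_one hnd ha, take_left, cons_append, idxOf_cons_self,
    drop_zero]

lemma subpath_append_right [DecidableEq V] {s t : List V} {v y : V} (hnd : (s ++ t).Nodup)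
    (hv : t.head? = some v) (hy : t.getLast? = some y) : subpath (s ++ t) v y = t := by
  obtain ⟨t, rfl⟩ := head?_eq_some_iff.1 hv
  have hvs : v ∉ s := fun h => (nodup_append'.1 hnd).2.2 h mem_cons_self
  have hlast := idxOf_append_add_one (t := []) (by rwa [append_nil])
    (by rwa [getLast?_append_cons] : (s ++ v :: t).getLast? = some y)
  rw [append_nil] at hlast
  rw [subpath, hlast, take_length, idxOf_append_of_notMem hvs, idxOf_cons_self, add_zero,
    drop_left]

lemma bijOn_HavPairs [Fintype V] [DecidableEq V] (hG : NoNonposCycle E ℓ)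
    {x1 y1 x2 y2 a v : V} (hE : E a v)
    (hd1 : dist E ℓ x1 y1 = dist E ℓ x1 a + ℓ a v + dist E ℓ v y1)
    (hd2 : dist E ℓ x2 y2 = dist E ℓ x2 a + ℓ a v + dist E ℓ v y2) :
    Set.BijOn (fun z : List V × (List V × List V) × List V => (z.2.1.1 ++ z.2.2, z.1 ++ z.2.1.2))
      ({p | IsShortestPath E ℓ p x2 a} ×ˢ
        (disjPairs E ℓ x1 a v y2 ×ˢ {p | IsShortestPath E ℓ p v y1}))
      (HavPairs E ℓ a v x1 y1 x2 y2) := by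
  refine ⟨?mapsTo, ?injOn, ?surjOn⟩
  case mapsTo =>
    rintro ⟨Q2, ⟨Q1, R2⟩, R1⟩ ⟨hQ2, ⟨hQ1, hR2, hdisj⟩, hR1⟩
    have hP1 := hQ1.append hG hE hd1 hR1
    have hP2 := hQ2.append hG hE hd2 hR2
    refine ⟨hP1, hP2, mem_pathEdges_iff.2 ⟨_, _, hQ1.1.2.2, hR1.1.2.1, rfl⟩,
      mem_pathEdges_iff.2 ⟨_, _, hQ2.1.2.2, hR2.1.2.1, rfl⟩, ?_⟩
    rwa [subpath_append_left hP1.1.1.2.1 hQ1.1.2.1 hQ1.1.2.2,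
      subpath_append_right hP2.1.1.2.1 hR2.1.2.1 hR2.1.2.2]
  case injOn =>
    rintro ⟨Q2, ⟨Q1, R2⟩, R1⟩ ⟨hQ2, ⟨hQ1, hR2, -⟩, hR1⟩
      ⟨Q2', ⟨Q1', R2'⟩, R1'⟩ ⟨hQ2', ⟨hQ1', -, -⟩, -⟩ h
    obtain ⟨h1, h2⟩ := Prod.mk.inj h
    obtain ⟨rfl, rfl⟩ := append_inj_of_getLast? (hQ1.append hG hE hd1 hR1).1.1.2.1 h1
      hQ1.1.2.2 hQ1'.1.2.2
    obtain ⟨rfl, rfl⟩ := append_inj_of_getLast? (hQ2.append hG hE hd2 hR2).1.1.2.1 h2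
      hQ2.1.2.2 hQ2'.1.2.2
    rfl
  case surjOn =>
    rintro ⟨P1, P2⟩ ⟨hP1, hP2, he1, he2, hdisj⟩
    obtain ⟨Q1, R1, ha1, hv1, rfl⟩ := mem_pathEdges_iff.1 he1
    obtain ⟨Q2, R2, ha2, hv2, rfl⟩ := mem_pathEdges_iff.1 he2
    obtain ⟨hQ1, hR1⟩ := hP1.of_append hd1 ha1 hv1
    obtain ⟨hQ2, hR2⟩ := hP2.of_append hd2 ha2 hv2
    refine ⟨(Q2, (Q1, R2), R1), ⟨hQ2, ⟨hQ1, hR2, ?_⟩, hR1⟩, rfl⟩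
    rwa [subpath_append_left hP1.1.1.2.1 hQ1.1.2.1 ha1,
      subpath_append_right hP2.1.1.2.1 hv2 hR2.1.2.2] at hdisj

lemma finsum_mem_mul_finsum_mem {α β R : Type*} [NonUnitalNonAssocSemiring R] {s : Set α}
    {t : Set β} (hs : s.Finite) (ht : t.Finite) (f : α → R) (g : β → R) :
    (∑ᶠ x ∈ s, f x) * ∑ᶠ y ∈ t, g y = ∑ᶠ z ∈ s ×ˢ t, f z.1 * g z.2 := by
  rw [← hs.coe_toFinset, ← ht.coe_toFinset, ← Finset.coe_product, finsum_mem_coe_finset,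
    finsum_mem_coe_finset, finsum_mem_coe_finset, Finset.sum_mul_sum, Finset.sum_product]

end DSP

namespace DSP

variable {V : Type*} [Fintype V] [DecidableEq V] (E : V → V → Prop) (ℓ : V → V → ℝ)

theorem Hav_eq_F_mul_sq_mul_Fdisj_mul_F
    (F : Type*) [Field F]
    (hG : NoNonposCycle E ℓ) (x1 y1 x2 y2 a v : V) (hE : E a v)
    (hd1 : dist E ℓ x1 y1 = dist E ℓ x1 a + (ℓ a v : EReal) + dist E ℓ v y1)
    (hd2 : dist E ℓ x2 y2 = dist E ℓ x2 a + (ℓ a v : EReal) + dist E ℓ v y2) :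
    enumPoly2 F (HavPairs E ℓ a v x1 y1 x2 y2) =
      Fpoly F E ℓ x2 a * (MvPolynomial.X (a, v) : MvPolynomial (V × V) F) ^ 2 *
        enumPoly2 F (disjPairs E ℓ x1 a v y2) * Fpoly F E ℓ v y1 := by
  set X : MvPolynomial (V × V) F := MvPolynomial.X (a, v)
  have hD : (disjPairs E ℓ x1 a v y2).Finite :=
    ((finite_setOf_isShortestPath x1 a).prod (finite_setOf_isShortestPath v y2)).subset
      fun _ hq => ⟨hq.1, hq.2.1⟩
  calc enumPoly2 F (HavPairs E ℓ a v x1 y1 x2 y2)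
      = ∑ᶠ z ∈ {p | IsShortestPath E ℓ p x2 a} ×ˢ
          (disjPairs E ℓ x1 a v y2 ×ˢ {p | IsShortestPath E ℓ p v y1}),
          pathMon F z.1 * (X ^ 2 * (pathMon F z.2.1.1 * pathMon F z.2.1.2) * pathMon F z.2.2) := by
        refine (finsum_mem_eq_of_bijOn _ (bijOn_HavPairs hG hE hd1 hd2) ?_).symm
        rintro ⟨Q2, ⟨Q1, R2⟩, R1⟩ ⟨hQ2, ⟨hQ1, hR2, -⟩, hR1⟩
        simp only [pathMon_append F hQ1.1.2.2 hR1.1.2.1, pathMon_append F hQ2.1.2.2 hR2.1.2.1]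
        ring
    _ = Fpoly F E ℓ x2 a *
          (X ^ 2 * enumPoly2 F (disjPairs E ℓ x1 a v y2) * Fpoly F E ℓ v y1) := by
        rw [enumPoly2, mul_finsum_mem, Fpoly, Fpoly, enumPoly, enumPoly,
          finsum_mem_mul_finsum_mem hD (finite_setOf_isShortestPath v y1),
          finsum_mem_mul_finsum_mem (finite_setOf_isShortestPath x2 a)
            (hD.prod (finite_setOf_isShortestPath v y1))]
    _ = _ := by ring

end DSP
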